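/- Let (a,b) ∈ {(3,0), (1,2)} ⊆ (ℤ/4ℤ)², i.e., θ = a + bw ∈ {3, 1+2w}, and R = R_θ. Then (2) = (2w) and (1+w) = (3+w) = (1+3w) = (3+3w) as ideals of R, and R has exactly five ideals, which form the chain (0) ⊊ (2+2w) ⊊ (2) ⊊ (1+w) ⊊ R. -/

import Mathlib

open Polynomial

/-- The base ring ℤ/4ℤ. -/
abbrev Z4 := ZMod 4

/-- The polynomial X² − (a + bX) over ℤ/4ℤ. -/
noncomputable def wPoly (a b : Z4) : Z4[X] := X ^ 2 - (C b * X + C a)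

/-- The ring R_{a+bw} = (ℤ/4ℤ)[X]/(X² − (a + bX)); every element is uniquely
x₀ + x₁·w with x₀, x₁ ∈ ℤ/4ℤ, and w² = a + b·w. -/
abbrev Rw (a b : Z4) : Type := AdjoinRoot (wPoly a b)

/-- The element w of R_{a+bw}. -/
noncomputable def ww (a b : Z4) : Rw a b := AdjoinRoot.root _

/-! With t = 1 + w one has (t²) = (2) in both rings, hence t⁴ = 0 and (t³) = (2t) = (2 + 2w) ≠ 0,
while R/(t) = 𝔽₂ because w ≡ -1 and 2 ≡ 0 there; so (t) is a maximal ideal that is nilpotent.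
Such a ring is a chain ring: (t) is its only maximal ideal, so an element of (tᵏ) outside (tᵏ⁺¹)
is tᵏ times a unit and every ideal is some (tᵏ); and (tᵏ⁺¹) ≠ (tᵏ) as long as tᵏ ≠ 0, because
1 - yt is a unit. Finally each ±1 ± w is t plus a multiple of 2 ∈ (t²), hence t times a unit.
-/

namespace Ideal

variable {R : Type*} [CommRing R]

theorem isMaximal_of_forall_mem_or_sub_one_mem {I : Ideal R} (hI : I ≠ ⊤)
    (h : ∀ x, x ∈ I ∨ x - 1 ∈ I) : I.IsMaximal := by
  refine isMaximal_iff.mpr ⟨(ne_top_iff_one I).mp hI, fun J x hIJ hxI hxJ => ?_⟩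
  have hx1 : x - 1 ∈ J := hIJ ((h x).resolve_left hxI)
  simpa using J.sub_mem hxJ hx1

section NilpotentGenerator

variable {t : R} (ht : IsNilpotent t)
include ht

theorem isUnit_one_sub_of_mem_span_singleton {s : R} (hs : s ∈ span {t}) : IsUnit (1 - s) := by
  obtain ⟨r, rfl⟩ := mem_span_singleton'.mp hs
  exact (Commute.all r t).isNilpotent_mul_left ht |>.isUnit_one_sub

theorem isUnit_of_notMem_span_singleton (hmax : (span {t}).IsMaximal) {x : R}
    (hx : x ∉ span {t}) : IsUnit x := by
  obtain ⟨y, i, hi, hyx⟩ := hmax.exists_inv hx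
  have hu : IsUnit (y * x) := by
    rw [eq_sub_of_add_eq hyx]
    exact isUnit_one_sub_of_mem_span_singleton ht hi
  exact isUnit_of_mul_isUnit_right hu

theorem span_singleton_eq_span_pow (hmax : (span {t}).IsMaximal) {x : R} {k : ℕ}
    (hx : x ∈ span {t ^ k}) (hx' : x ∉ span {t ^ (k + 1)}) : span {x} = span {t ^ k} := by
  obtain ⟨y, rfl⟩ := mem_span_singleton'.mp hx
  have hy : y ∉ span {t} := by
    intro hy
    obtain ⟨z, rfl⟩ := mem_span_singleton'.mp hy
    exact hx' (mem_span_singleton'.mpr ⟨z, by ring⟩)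
  rw [mul_comm]
  exact span_singleton_mul_right_unit (isUnit_of_notMem_span_singleton ht hmax hy) _

theorem exists_eq_span_pow (hmax : (span {t}).IsMaximal) (I : Ideal R) :
    ∃ k, I = span {t ^ k} := by
  obtain ⟨n, hn⟩ := ht
  suffices ∀ k, I ≤ span {t ^ k} ∨ ∃ j, I = span {t ^ j} by
    refine (this n).elim (fun h => ⟨n, ?_⟩) id
    rw [hn, span_singleton_eq_bot.mpr rfl, le_bot_iff] at h
    rw [h, hn, span_singleton_eq_bot.mpr rfl]
  intro k
  induction k with
  | zero => simp
  | succ k ih =>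
    refine ih.elim (fun hk => ?_) Or.inr
    by_cases hle : I ≤ span {t ^ (k + 1)}
    · exact Or.inl hle
    obtain ⟨x, hxI, hx⟩ := Set.not_subset.mp hle
    refine Or.inr ⟨k, le_antisymm hk ?_⟩
    rw [← span_singleton_eq_span_pow ⟨n, hn⟩ hmax (hk hxI) hx, span_singleton_le_iff_mem]
    exact hxI

theorem span_pow_succ_lt_span_pow {k : ℕ} (hk : t ^ k ≠ 0) :
    span {t ^ (k + 1)} < span {t ^ k} := by
  refine lt_of_le_of_ne (span_singleton_le_span_singleton.mpr (pow_dvd_pow t k.le_succ)) ?_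
  intro h
  obtain ⟨y, hy⟩ := mem_span_singleton'.mp (h ▸ mem_span_singleton_self (t ^ k))
  have hu := isUnit_one_sub_of_mem_span_singleton ht (mem_span_singleton'.mpr ⟨y, rfl⟩)
  refine hk (hu.mul_left_eq_zero.mp ?_)
  linear_combination -hy

theorem span_add_eq_span_singleton {s : R} (hs : s ∈ span {t ^ 2}) :
    span {t + s} = span {t} := by
  obtain ⟨r, rfl⟩ := mem_span_singleton'.mp hs
  have hu : IsUnit (1 + r * t) := ((Commute.all r t).isNilpotent_mul_left ht).isUnit_one_add
  rw [← span_singleton_mul_right_unit hu t]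
  congr 2
  ring

end NilpotentGenerator

theorem span_pow_chain_of_pow_four_eq_zero {t : R} (hmax : (span {t}).IsMaximal)
    (h4 : t ^ 4 = 0) (h3 : t ^ 3 ≠ 0) :
    (∀ I : Ideal R, I = ⊥ ∨ I = span {t ^ 3} ∨ I = span {t ^ 2} ∨ I = span {t} ∨ I = ⊤) ∧
    ⊥ < span {t ^ 3} ∧ span {t ^ 3} < span {t ^ 2} ∧ span {t ^ 2} < span {t} ∧
    span {t} < ⊤ := by
  have ht : IsNilpotent t := ⟨4, h4⟩
  have h2 : t ^ 2 ≠ 0 := fun h => h3 (by rw [pow_succ, h, zero_mul])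
  have h1 : t ^ 1 ≠ 0 := fun h => h2 (by rw [pow_succ, h, zero_mul])
  refine ⟨fun I => ?_, bot_lt_iff_ne_bot.mpr (span_singleton_eq_bot.not.mpr h3),
    span_pow_succ_lt_span_pow ht h2, by simpa using span_pow_succ_lt_span_pow ht h1,
    lt_top_iff_ne_top.mpr hmax.ne_top⟩
  obtain ⟨k, rfl⟩ := exists_eq_span_pow ht hmax I
  match k with
  | 0 => simp
  | 1 => simp
  | 2 => simp
  | 3 => simp
  | k + 4 => simp [pow_add, h4]

end Ideal

open Ideal

namespace Rw

variable (a b : Z4)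

theorem monic_wPoly : (wPoly a b).Monic := monic_X_pow_sub degree_linear_lt

theorem natDegree_wPoly : (wPoly a b).natDegree = 2 := by
  unfold wPoly; compute_degree!

theorem ww_sq : ww a b ^ 2 = algebraMap Z4 (Rw a b) a + algebraMap Z4 (Rw a b) b * ww a b := by
  have h : (X ^ 2 - (C b * X + C a)).eval₂ (AdjoinRoot.of (wPoly a b)) (ww a b) = 0 :=
    AdjoinRoot.eval₂_root _
  simp only [eval₂_sub, eval₂_pow, eval₂_X, eval₂_add, eval₂_mul, eval₂_C, sub_eq_zero] at h
  rw [h, AdjoinRoot.algebraMap_eq]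
  ring

theorem four_eq_zero : (4 : Rw a b) = 0 := by
  rw [← map_ofNat (algebraMap Z4 (Rw a b)) 4, show (4 : Z4) = 0 from rfl, map_zero]

theorem exists_eq_algebraMap_add_mul_ww (x : Rw a b) :
    ∃ c₀ c₁ : Z4, x = algebraMap Z4 (Rw a b) c₀ + algebraMap Z4 (Rw a b) c₁ * ww a b := by
  nontriviality (Rw a b)
  obtain ⟨f, hf, rfl⟩ := (AdjoinRoot.powerBasis' (monic_wPoly a b)).exists_eq_aeval x
  refine ⟨f.coeff 0, f.coeff 1, ?_⟩
  rw [AdjoinRoot.powerBasis'_dim, natDegree_wPoly] at hf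
  rw [AdjoinRoot.powerBasis'_gen, eq_X_add_C_of_natDegree_le_one (Nat.lt_succ_iff.mp hf)]
  simp [ww, add_comm]

theorem two_add_two_mul_ww_ne_zero : (2 : Rw a b) + 2 * ww a b ≠ 0 := by
  have h := AdjoinRoot.mk_ne_zero_of_natDegree_lt (monic_wPoly a b) (g := C 2 * X + C 2)
    (fun h0 => (by decide : (2 : Z4) ≠ 0) (by simpa using congrArg (coeff · 0) h0))
    (natDegree_linear_le.trans_lt (by rw [natDegree_wPoly]; norm_num))
  simp only [map_add, map_mul, AdjoinRoot.mk_C, AdjoinRoot.mk_X] at h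
  rwa [map_ofNat, add_comm] at h

variable {a b}

theorem mem_or_sub_one_mem_span_one_add_ww (h2 : (2 : Rw a b) ∈ span {1 + ww a b}) (x : Rw a b) :
    x ∈ span {1 + ww a b} ∨ x - 1 ∈ span {1 + ww a b} := by
  have hZ4 : ∀ c : Z4, algebraMap Z4 (Rw a b) c ∈ span {1 + ww a b} ∨
      algebraMap Z4 (Rw a b) c - 1 ∈ span {1 + ww a b} := by
    intro c
    obtain ⟨d, rfl | rfl⟩ : ∃ d : Z4, c = 2 * d ∨ c = 2 * d + 1 := by revert c; decide
    · left
      simpa only [map_mul, map_ofNat, mul_comm] using mul_mem_left _ (algebraMap Z4 _ d) h2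
    · right
      simpa only [map_add, map_mul, map_ofNat, map_one, add_sub_cancel_right, mul_comm]
        using mul_mem_left _ (algebraMap Z4 _ d) h2
  obtain ⟨c₀, c₁, rfl⟩ := exists_eq_algebraMap_add_mul_ww a b x
  have hx : algebraMap Z4 (Rw a b) c₀ + algebraMap Z4 (Rw a b) c₁ * ww a b =
      algebraMap Z4 (Rw a b) (c₀ - c₁) + algebraMap Z4 (Rw a b) c₁ * (1 + ww a b) := by
    rw [map_sub]; ring
  have ht : algebraMap Z4 (Rw a b) c₁ * (1 + ww a b) ∈ span {1 + ww a b} :=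
    mul_mem_left _ _ (mem_span_singleton_self _)
  rw [hx, add_sub_right_comm]
  exact (hZ4 (c₀ - c₁)).imp (add_mem · ht) (add_mem · ht)

theorem span_one_add_ww_sq (hab : (a = 3 ∧ b = 0) ∨ (a = 1 ∧ b = 2)) :
    span {(1 + ww a b) ^ 2} = span {(2 : Rw a b)} := by
  have h4 := four_eq_zero a b
  have hw := ww_sq a b
  rcases hab with ⟨rfl, rfl⟩ | ⟨rfl, rfl⟩
  · -- w² = 3 gives (1 + w)² = 2w and w⁻¹ = 3w
    simp only [map_ofNat, map_zero, zero_mul, add_zero] at hw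
    refine le_antisymm (span_singleton_le_span_singleton.mpr ⟨ww 3 0, ?_⟩)
      (span_singleton_le_span_singleton.mpr ⟨3 * ww 3 0, ?_⟩)
    · linear_combination hw + h4
    · linear_combination -(6 + 3 * ww 3 0) * hw - (4 + 3 * ww 3 0) * h4
  · -- w² = 1 + 2w gives (1 + w)² = 2
    simp only [map_ofNat, map_one] at hw
    congr 2
    linear_combination hw + ww 1 2 * h4

variable (h : span {(1 + ww a b) ^ 2} = span {(2 : Rw a b)})
include h

theorem one_add_ww_pow_four : (1 + ww a b) ^ 4 = 0 := by
  obtain ⟨u, hu⟩ := mem_span_singleton.mp (h ▸ mem_span_singleton_self ((1 + ww a b) ^ 2))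
  linear_combination ((1 + ww a b) ^ 2 + 2 * u) * hu + u ^ 2 * four_eq_zero a b

theorem span_one_add_ww_pow_three : span {(1 + ww a b) ^ 3} = span {2 + 2 * ww a b} := by
  rw [pow_succ', ← span_singleton_mul_span_singleton, h, span_singleton_mul_span_singleton]
  congr 2
  ring

theorem isMaximal_span_one_add_ww : (span {1 + ww a b}).IsMaximal := by
  have : Nontrivial (Rw a b) := nontrivial_of_ne _ _ (two_add_two_mul_ww_ne_zero a b)
  refine isMaximal_of_forall_mem_or_sub_one_mem ?_ (mem_or_sub_one_mem_span_one_add_ww ?_)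
  · exact span_singleton_ne_top (IsNilpotent.not_isUnit ⟨4, one_add_ww_pow_four h⟩)
  · refine span_singleton_le_span_singleton.mpr (dvd_pow_self _ two_ne_zero) ?_
    rw [h]
    exact mem_span_singleton_self 2

end Rw

/-- for θ = a + bw ∈ {3, 1+2w}, in R_θ one has (2) = (2w) and
(1+w) = (3+w) = (1+3w) = (3+3w), and R_θ has exactly five ideals, forming the chain
(0) ⊊ (2+2w) ⊊ (2) ⊊ (1+w) ⊊ R_θ. -/
theorem ideals_of_Rw_theta_three_case (a b : Z4) (hab : (a = 3 ∧ b = 0) ∨ (a = 1 ∧ b = 2)) :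
    Ideal.span {(2 : Rw a b)} = Ideal.span {2 * ww a b} ∧
    Ideal.span {1 + ww a b} = Ideal.span {3 + ww a b} ∧
    Ideal.span {1 + ww a b} = Ideal.span {1 + 3 * ww a b} ∧
    Ideal.span {1 + ww a b} = Ideal.span {3 + 3 * ww a b} ∧
    (∀ I : Ideal (Rw a b),
      I = ⊥ ∨ I = Ideal.span {2 + 2 * ww a b} ∨ I = Ideal.span {(2 : Rw a b)} ∨
      I = Ideal.span {1 + ww a b} ∨ I = ⊤) ∧
    (⊥ : Ideal (Rw a b)) < Ideal.span {2 + 2 * ww a b} ∧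
    Ideal.span {2 + 2 * ww a b} < Ideal.span {(2 : Rw a b)} ∧
    Ideal.span {(2 : Rw a b)} < Ideal.span {1 + ww a b} ∧
    Ideal.span {1 + ww a b} < (⊤ : Ideal (Rw a b)) := by
  have h2 := Rw.span_one_add_ww_sq hab
  have h3 := Rw.span_one_add_ww_pow_three h2
  have h4 := Rw.one_add_ww_pow_four h2
  have hnil : IsNilpotent (1 + ww a b) := ⟨4, h4⟩
  have h3ne : (1 + ww a b) ^ 3 ≠ 0 := by
    rw [Ne, ← span_singleton_eq_bot, h3, span_singleton_eq_bot]
    exact Rw.two_add_two_mul_ww_ne_zero a b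
  have hsq : (2 : Rw a b) ∈ span {(1 + ww a b) ^ 2} := h2 ▸ mem_span_singleton_self 2
  have hw : IsUnit (ww a b) := by simpa using hnil.isUnit_sub_one
  rw [← h2, ← h3]
  refine ⟨?_, ?_, ?_, ?_,
    span_pow_chain_of_pow_four_eq_zero (Rw.isMaximal_span_one_add_ww h2) h4 h3ne⟩
  · rw [h2, span_singleton_mul_right_unit hw]
  · rw [show 3 + ww a b = 1 + ww a b + 2 by ring, span_add_eq_span_singleton hnil hsq]
  · rw [show 1 + 3 * ww a b = 1 + ww a b + 2 * ww a b by ring,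
      span_add_eq_span_singleton hnil (mul_mem_right _ _ hsq)]
  · rw [show 3 + 3 * ww a b = 1 + ww a b + 2 * (1 + ww a b) by ring,
      span_add_eq_span_singleton hnil (mul_mem_right _ _ hsq)]
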